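/- arXiv:1406.3334 — 3 statements merged into one kernel-verified Lean document; each statement's English description precedes it below -/
import Mathlib

section
/- Fix p ∈ {1,…,d} and λ > 0. If √(σ̂_p² − R̂_p) < ŵ_p λ / 2, then the Lasso k-means codebook satisfies ĉ_{n,λ}^{(p)} = (ĉ_{n,λ,1}^{(p)},…,ĉ_{n,λ,k}^{(p)}) = (0,…,0). -/
open MeasureTheory ProbabilityTheory Real Matrix Filter

noncomputable section

/-- The k-means contrast: `γ(c, x) = min_j ‖x − c_j‖²`. -/
def gammaF {d k : ℕ} (c : Fin k → EuclideanSpace ℝ (Fin d))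
    (x : EuclideanSpace ℝ (Fin d)) : ℝ :=
  ⨅ j, ‖x - c j‖ ^ 2

/-- The distortion `R(c) = ∫ min_j ‖x − c_j‖² dP(x)`. -/
def distortion {d k : ℕ} (P : Measure (EuclideanSpace ℝ (Fin d)))
    (c : Fin k → EuclideanSpace ℝ (Fin d)) : ℝ :=
  ∫ x, gammaF c x ∂P

/-- The constraint set `C^k`, where `C = ∏_p [−M_p, M_p]`. -/
def Ck {d : ℕ} (k : ℕ) (Mb : Fin d → ℝ) : Set (Fin k → EuclideanSpace ℝ (Fin d)) :=
  {c | ∀ j p, |c j p| ≤ Mb p}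

/-- `‖c^{(p)}‖`, the Euclidean norm of the vector of p-th coordinates of the code points. -/
def coordNorm {d k : ℕ} (c : Fin k → EuclideanSpace ℝ (Fin d)) (p : Fin d) : ℝ :=
  Real.sqrt (∑ j, (c j p) ^ 2)

/-- The penalty `I_w(c) = ∑_p w_p ‖c^{(p)}‖`. -/
def pen {d k : ℕ} (w : Fin d → ℝ) (c : Fin k → EuclideanSpace ℝ (Fin d)) : ℝ :=
  ∑ p, w p * coordNorm c p

/-- The support `S(c) = {p : c^{(p)} ≠ 0}`. -/
def supp {d k : ℕ} (c : Fin k → EuclideanSpace ℝ (Fin d)) : Set (Fin d) :=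
  {p | ∃ j, c j p ≠ 0}

/-- Squared Euclidean distance `‖c − c'‖²` between codebooks, seen as kd-dimensional vectors. -/
def distsq {d k : ℕ} (c c' : Fin k → EuclideanSpace ℝ (Fin d)) : ℝ :=
  ∑ j, ‖c j - c' j‖ ^ 2

/-- The empirical distortion `P_n γ(c, ·)` associated with the sample `X`. -/
def empRisk {d k n : ℕ} (X : Fin n → EuclideanSpace ℝ (Fin d))
    (c : Fin k → EuclideanSpace ℝ (Fin d)) : ℝ :=
  (1 : ℝ) / n * ∑ i, gammaF c (X i)

/-- The set `𝓜` of optimal codebooks (global minimizers of the distortion). -/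
def optSet {d : ℕ} (P : Measure (EuclideanSpace ℝ (Fin d))) (k : ℕ) :
    Set (Fin k → EuclideanSpace ℝ (Fin d)) :=
  {cs | ∀ c : Fin k → EuclideanSpace ℝ (Fin d), distortion P cs ≤ distortion P c}

/-- `‖w_{S(c)}‖² = ∑_{p ∈ S(c)} w_p²`. -/
def wnormsq {d k : ℕ} (w : Fin d → ℝ) (c : Fin k → EuclideanSpace ℝ (Fin d)) : ℝ :=
  ∑ p, (supp c).indicator (fun q => (w q) ^ 2) p

/-! Zeroing the `p`-th coordinate of `ĉ` keeps it in `C^k`, lowers the penalty by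
`λ ŵ_p ‖a‖` with `a = ĉ^{(p)}`, and, keeping the nearest-centre assignment `φ` of `ĉ`, raises the
empirical risk by at most `G = P_n [x_p² − (x_p − a_φ)²]`. Let `b` be the vector of cell means of
`x_p` along `φ`. The residual `x_p − b_φ` is orthogonal to every function of the cell, so
`G = 2 ⟨b_φ, a_φ⟩ − ‖a_φ‖² ≤ 2 ‖b_φ‖ ‖a_φ‖` (Cauchy–Schwarz), where
`‖b_φ‖² = σ̂_p² − P_n (x_p − b_φ)² ≤ σ̂_p² − R̂_p` because `b` is admissible for `R̂_p`, and
`‖a_φ‖ ≤ ‖a‖`. Minimality of `ĉ` thus gives `λ ŵ_p ‖a‖ ≤ 2 √(σ̂_p² − R̂_p) ‖a‖`, which forces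
`a = 0` under the condition. -/

open Finset

section CellMean

variable {ι κ : Type*} [Fintype ι]

theorem iInf_quantization_le [Finite κ] {M t : ℝ} (ht : 0 ≤ t) (x : ι → ℝ) (φ : ι → κ)
    {b : κ → ℝ} (hb : ∀ j, |b j| ≤ M) :
    ⨅ a : {a : κ → ℝ // ∀ j, |a j| ≤ M}, t * ∑ i, ⨅ j, (x i - a.1 j) ^ 2
      ≤ t * ∑ i, (x i - b (φ i)) ^ 2 := by
  refine (ciInf_le ⟨0, ?_⟩ ⟨b, hb⟩).trans ?_
  · rintro _ ⟨a, rfl⟩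
    exact mul_nonneg ht (sum_nonneg fun i _ => Real.iInf_nonneg fun j => sq_nonneg _)
  · gcongr with i
    exact ciInf_le (Set.finite_range _).bddBelow (φ i)

variable [DecidableEq κ]

/-- An empty cell has mean `0` (division by zero). -/
def cellMean (φ : ι → κ) (x : ι → ℝ) (j : κ) : ℝ :=
  (∑ i with φ i = j, x i) / #{i | φ i = j}

theorem abs_cellMean_le {M : ℝ} (hM : 0 ≤ M) {x : ι → ℝ} (hx : ∀ i, |x i| ≤ M)
    (φ : ι → κ) (j : κ) : |cellMean φ x j| ≤ M := by
  rw [cellMean, abs_div, Nat.abs_cast]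
  rcases (#{i | φ i = j}).eq_zero_or_pos with h | h
  · simp [h, hM]
  · rw [div_le_iff₀ (by positivity)]
    calc |∑ i with φ i = j, x i| ≤ ∑ i with φ i = j, |x i| := abs_sum_le_sum_abs _ _
      _ ≤ ∑ i with φ i = j, M := sum_le_sum fun i _ => hx i
      _ = M * #{i | φ i = j} := by rw [sum_const, nsmul_eq_mul, mul_comm]

theorem sum_sub_cellMean_mul [Fintype κ] (φ : ι → κ) (x : ι → ℝ) (g : κ → ℝ) :
    ∑ i, (x i - cellMean φ x (φ i)) * g (φ i) = 0 := by
  rw [← sum_fiberwise univ φ]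
  refine sum_eq_zero fun j _ => ?_
  rw [sum_congr rfl fun i hi => by rw [(mem_filter.1 hi).2], ← sum_mul, sum_sub_distrib,
    sum_const, nsmul_eq_mul, cellMean]
  rcases eq_or_ne (#{i | φ i = j} : ℝ) 0 with h | h
  · simp only [Nat.cast_eq_zero, card_eq_zero] at h
    simp [h]
  · rw [mul_div_cancel₀ _ h, sub_self, zero_mul]

theorem sum_cellMean_sq [Fintype κ] (φ : ι → κ) (x : ι → ℝ) :
    ∑ i, cellMean φ x (φ i) ^ 2 = ∑ i, x i ^ 2 - ∑ i, (x i - cellMean φ x (φ i)) ^ 2 := by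
  have h := sum_sub_cellMean_mul φ x (cellMean φ x)
  have hi (i : ι) : cellMean φ x (φ i) ^ 2 = x i ^ 2 - (x i - cellMean φ x (φ i)) ^ 2
      - 2 * ((x i - cellMean φ x (φ i)) * cellMean φ x (φ i)) := by ring
  rw [sum_congr rfl fun i _ => hi i, sum_sub_distrib, sum_sub_distrib, ← mul_sum, h, mul_zero,
    sub_zero]

theorem mul_sum_sq_sub_sq_le [Fintype κ] {t : ℝ} (ht : 0 ≤ t) (φ : ι → κ) (x : ι → ℝ)
    (a : κ → ℝ) :
    t * ∑ i, (x i ^ 2 - (x i - a (φ i)) ^ 2)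
      ≤ 2 * (√(t * ∑ i, cellMean φ x (φ i) ^ 2) * √(t * ∑ i, a (φ i) ^ 2)) := by
  have hcs := Real.sum_mul_le_sqrt_mul_sqrt univ (fun i => cellMean φ x (φ i)) (fun i => a (φ i))
  have hsplit : ∑ i, (x i ^ 2 - (x i - a (φ i)) ^ 2) = 2 * ∑ i, (x i - cellMean φ x (φ i)) * a (φ i)
      + 2 * ∑ i, cellMean φ x (φ i) * a (φ i) - ∑ i, a (φ i) ^ 2 := by
    rw [mul_sum, mul_sum, ← sum_add_distrib, ← sum_sub_distrib]
    exact sum_congr rfl fun i _ => by ring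
  have hsq : 0 ≤ ∑ i, a (φ i) ^ 2 := sum_nonneg fun i _ => sq_nonneg _
  rw [Real.sqrt_mul ht, Real.sqrt_mul ht, mul_mul_mul_comm, Real.mul_self_sqrt ht, hsplit,
    sum_sub_cellMean_mul, mul_zero, zero_add, mul_left_comm]
  gcongr
  linarith

end CellMean

section Codebook

variable {d k : ℕ}

theorem sum_sub_sum_eq_of_eq_off {ι : Type*} [Fintype ι] [DecidableEq ι] {f g : ι → ℝ} (p : ι)
    (h : ∀ q ≠ p, f q = g q) : ∑ q, f q - ∑ q, g q = f p - g p := by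
  rw [← add_sum_erase _ f (mem_univ p), ← add_sum_erase _ g (mem_univ p),
    sum_congr rfl fun q hq => h q (ne_of_mem_erase hq), add_sub_add_right_eq_sub]

def eraseCoord (c : Fin k → EuclideanSpace ℝ (Fin d)) (p : Fin d) :
    Fin k → EuclideanSpace ℝ (Fin d) :=
  fun j => WithLp.toLp 2 (Function.update (c j).ofLp p 0)

@[simp]
theorem eraseCoord_apply (c : Fin k → EuclideanSpace ℝ (Fin d)) (p : Fin d) (j : Fin k)
    (q : Fin d) :
    eraseCoord c p j q = Function.update (c j).ofLp p 0 q := rfl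

theorem eraseCoord_mem_Ck {Mb : Fin d → ℝ} {c : Fin k → EuclideanSpace ℝ (Fin d)} (hc : c ∈ Ck k Mb)
    {p : Fin d} (hp : 0 ≤ Mb p) : eraseCoord c p ∈ Ck k Mb := by
  intro j q
  rcases eq_or_ne q p with rfl | hq
  · simpa using hp
  · simpa [hq] using hc j q

theorem coordNorm_eq_zero_iff {c : Fin k → EuclideanSpace ℝ (Fin d)} {p : Fin d} :
    coordNorm c p = 0 ↔ ∀ j, c j p = 0 := by
  rw [coordNorm, Real.sqrt_eq_zero (sum_nonneg fun j _ => sq_nonneg _),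
    sum_eq_zero_iff_of_nonneg fun j _ => sq_nonneg _]
  simp

theorem sq_le_coordNorm_sq (c : Fin k → EuclideanSpace ℝ (Fin d)) (p : Fin d) (j : Fin k) :
    c j p ^ 2 ≤ coordNorm c p ^ 2 := by
  rw [coordNorm, Real.sq_sqrt (sum_nonneg fun j _ => sq_nonneg _)]
  exact single_le_sum (fun j _ => sq_nonneg (c j p)) (mem_univ j)

theorem pen_sub_pen_eraseCoord (w : Fin d → ℝ) (c : Fin k → EuclideanSpace ℝ (Fin d)) (p : Fin d) :
    pen w c - pen w (eraseCoord c p) = w p * coordNorm c p := by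
  have hp : coordNorm (eraseCoord c p) p = 0 := coordNorm_eq_zero_iff.2 fun j => by simp
  rw [pen, pen, sum_sub_sum_eq_of_eq_off p fun q hq => by simp [coordNorm, hq], hp, mul_zero,
    sub_zero]

theorem norm_sub_eraseCoord_sq (x : EuclideanSpace ℝ (Fin d)) (c : Fin k → EuclideanSpace ℝ (Fin d))
    (p : Fin d) (j : Fin k) :
    ‖x - eraseCoord c p j‖ ^ 2 = ‖x - c j‖ ^ 2 + (x p ^ 2 - (x p - c j p) ^ 2) := by
  rw [← sub_eq_iff_eq_add', EuclideanSpace.norm_sq_eq, EuclideanSpace.norm_sq_eq,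
    sum_sub_sum_eq_of_eq_off p fun q hq => by simp [hq]]
  simp

theorem gammaF_le (c : Fin k → EuclideanSpace ℝ (Fin d)) (x : EuclideanSpace ℝ (Fin d))
    (j : Fin k) :
    gammaF c x ≤ ‖x - c j‖ ^ 2 :=
  ciInf_le (Set.finite_range _).bddBelow j

theorem exists_gammaF_eq [NeZero k] (c : Fin k → EuclideanSpace ℝ (Fin d))
    (x : EuclideanSpace ℝ (Fin d)) :
    ∃ j, gammaF c x = ‖x - c j‖ ^ 2 :=
  (exists_eq_ciInf_of_finite).imp fun _ h => h.symm

theorem empRisk_eraseCoord_le {n : ℕ} (X : Fin n → EuclideanSpace ℝ (Fin d))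
    {c : Fin k → EuclideanSpace ℝ (Fin d)} {φ : Fin n → Fin k}
    (hφ : ∀ i, gammaF c (X i) = ‖X i - c (φ i)‖ ^ 2) (p : Fin d) :
    empRisk X (eraseCoord c p)
      ≤ empRisk X c + 1 / n * ∑ i, (X i p ^ 2 - (X i p - c (φ i) p) ^ 2) := by
  rw [empRisk, empRisk, ← mul_add, ← sum_add_distrib]
  gcongr with i
  calc gammaF (eraseCoord c p) (X i) ≤ ‖X i - eraseCoord c p (φ i)‖ ^ 2 := gammaF_le _ _ _
    _ = _ := by rw [norm_sub_eraseCoord_sq, hφ]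

theorem mean_sq_coord_le_coordNorm_sq {n : ℕ} (c : Fin k → EuclideanSpace ℝ (Fin d))
    (φ : Fin n → Fin k) (p : Fin d) : 1 / n * ∑ i, c (φ i) p ^ 2 ≤ coordNorm c p ^ 2 :=
  calc 1 / n * ∑ i, c (φ i) p ^ 2 ≤ 1 / n * ∑ _i : Fin n, coordNorm c p ^ 2 :=
        mul_le_mul_of_nonneg_left (sum_le_sum fun i _ => sq_le_coordNorm_sq c p (φ i))
          (by positivity)
    _ = (n : ℝ)⁻¹ * n * coordNorm c p ^ 2 := by simp [mul_assoc]
    _ ≤ coordNorm c p ^ 2 := mul_le_of_le_one_left (sq_nonneg _) inv_mul_le_one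

theorem mul_coordNorm_le_of_minimizer {n : ℕ} {Mb : Fin d → ℝ}
    (X : Fin n → EuclideanSpace ℝ (Fin d))
    {w : Fin d → ℝ} {lam : ℝ} {c : Fin k → EuclideanSpace ℝ (Fin d)} (hc : c ∈ Ck k Mb)
    (hmin : ∀ c' ∈ Ck k Mb, empRisk X c + lam * pen w c ≤ empRisk X c' + lam * pen w c')
    {φ : Fin n → Fin k} (hφ : ∀ i, gammaF c (X i) = ‖X i - c (φ i)‖ ^ 2) {p : Fin d}
    (hp : 0 ≤ Mb p) :
    lam * (w p * coordNorm c p) ≤ 1 / n * ∑ i, (X i p ^ 2 - (X i p - c (φ i) p) ^ 2) := by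
  have hcompare := hmin _ (eraseCoord_mem_Ck hc hp)
  have hrisk := empRisk_eraseCoord_le X hφ p
  rw [← pen_sub_pen_eraseCoord w c p, mul_sub]
  linarith

end Codebook

theorem lasso_kmeans_zero_coordinate_general
    (d k n : ℕ)
    (Mb : Fin d → ℝ)
    -- the sample, with values in `C`
    (X : Fin n → EuclideanSpace ℝ (Fin d)) (hX : ∀ i p, |X i p| ≤ Mb p)
    -- the (possibly data-dependent) weights, and the regularization parameter
    (hatw : Fin d → ℝ)
    (lam : ℝ)
    -- the Lasso k-means codebook: a minimizer of the penalized empirical distortion over `C^k`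
    (hatc : Fin k → EuclideanSpace ℝ (Fin d)) (hmem : hatc ∈ Ck k Mb)
    (hmin : ∀ c ∈ Ck k Mb,
      empRisk X hatc + lam * pen hatw hatc ≤ empRisk X c + lam * pen hatw c)
    -- the coordinate `p`, the empirical second moment `σ̂_p²` and optimal distortion `R̂_p`
    (p : Fin d) (sigmahat2 Rhat : ℝ)
    (hsig : sigmahat2 = (1 : ℝ) / n * ∑ i, (X i p) ^ 2)
    (hRhat : Rhat = ⨅ a : {a : Fin k → ℝ // ∀ j, |a j| ≤ Mb p},
      (1 : ℝ) / n * ∑ i, ⨅ j, (X i p - a.1 j) ^ 2)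
    -- the condition
    (hcond : Real.sqrt (sigmahat2 - Rhat) < hatw p * lam / 2) :
    ∀ j, hatc j p = 0 := by
  intro j₀
  have : NeZero k := NeZero.of_pos j₀.pos
  choose φ hφ using fun i => exists_gammaF_eq hatc (X i)
  have hMp : 0 ≤ Mb p := (abs_nonneg _).trans (hmem j₀ p)
  set x : Fin n → ℝ := fun i => X i p
  have hgain := mul_coordNorm_le_of_minimizer X hmem hmin hφ hMp
  have hcells : 1 / n * ∑ i, cellMean φ x (φ i) ^ 2 ≤ sigmahat2 - Rhat := by
    have hR : Rhat ≤ 1 / n * ∑ i, (x i - cellMean φ x (φ i)) ^ 2 :=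
      hRhat.trans_le <| iInf_quantization_le (by positivity) x φ
        (abs_cellMean_le hMp (fun i => hX i p) φ)
    rw [sum_cellMean_sq, mul_sub, ← hsig]
    linarith
  have hbound := mul_sum_sq_sub_sq_le (by positivity : (0 : ℝ) ≤ 1 / n) φ x (fun j => hatc j p)
  have hnorm : coordNorm hatc p = 0 := by
    by_contra hne
    have hpos : 0 < coordNorm hatc p := (Real.sqrt_nonneg _).lt_of_ne' hne
    have hle : lam * (hatw p * coordNorm hatc p) ≤ 2 * (√(sigmahat2 - Rhat) * coordNorm hatc p) := by
      refine hgain.trans (hbound.trans ?_)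
      gcongr
      exact (Real.sqrt_le_left (Real.sqrt_nonneg _)).2 (mean_sq_coord_le_coordNorm_sq hatc φ p)
    have hlt := mul_lt_mul_of_pos_right hcond hpos
    linarith
  exact coordNorm_eq_zero_iff.1 hnorm j₀

/-- Proposition `KKTlasso`: if `√(σ̂_p² − R̂_p) < ŵ_p λ / 2` then the Lasso
k-means codebook has zero p-th coordinate. -/
theorem lasso_kmeans_zero_coordinate
    (d k n : ℕ) (hd : 0 < d) (hk : 0 < k) (hn : 0 < n)
    (Mb : Fin d → ℝ) (hMb : ∀ p, 0 ≤ Mb p)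
    -- the sample, with values in `C`
    (X : Fin n → EuclideanSpace ℝ (Fin d)) (hX : ∀ i p, |X i p| ≤ Mb p)
    -- the (possibly data-dependent) weights, and the regularization parameter
    (hatw : Fin d → ℝ) (hhatw : ∀ p, 0 < hatw p)
    (lam : ℝ) (hlam : 0 < lam)
    -- the Lasso k-means codebook: a minimizer of the penalized empirical distortion over `C^k`
    (hatc : Fin k → EuclideanSpace ℝ (Fin d)) (hmem : hatc ∈ Ck k Mb)
    (hmin : ∀ c ∈ Ck k Mb,
      empRisk X hatc + lam * pen hatw hatc ≤ empRisk X c + lam * pen hatw c)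
    -- the coordinate `p`, the empirical second moment `σ̂_p²` and optimal distortion `R̂_p`
    (p : Fin d) (sigmahat2 Rhat : ℝ)
    (hsig : sigmahat2 = (1 : ℝ) / n * ∑ i, (X i p) ^ 2)
    (hRhat : Rhat = ⨅ a : {a : Fin k → ℝ // ∀ j, |a j| ≤ Mb p},
      (1 : ℝ) / n * ∑ i, ⨅ j, (X i p - a.1 j) ^ 2)
    -- the condition
    (hcond : Real.sqrt (sigmahat2 - Rhat) < hatw p * lam / 2) :
    ∀ j, hatc j p = 0 :=
  lasso_kmeans_zero_coordinate_general d k n Mb X hX hatw lam hatc hmem hmin p sigmahat2 Rhat hsig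
    hRhat hcond

end
end

section
/- Let λ > 0 and p ∈ {1,…,d}. If σ_p² − R*_p < 8 λ² κ₀ w_p² / 3, then for every c* ∈ 𝓜 every element of 𝓜_λ(c*) has zero p-th coordinate; in particular c*_λ(c*)^{(p)} = (0,…,0). -/
open MeasureTheory ProbabilityTheory Real Matrix Filter

noncomputable section

/-!
Let `c'` be `c` with its `p`-th coordinate set to zero. Pointwise, for the centre `c_j` nearest
to `x`, `γ(c', x) ≤ ‖x − c'_j‖² = γ(c, x) + (x^{(p)})² − (x^{(p)} − c_j^{(p)})²`, and the last
square is at least `min_j (x^{(p)} − c_j^{(p)})²`. Integrating gives `R(c') ≤ R(c) + σ_p² − R*_p`,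
while the penalty drops by `8κ₀λ²w_p²`. So if `p ∈ S(c)`, the hypothesis
`σ_p² − R*_p < 8λ²κ₀w_p²/3` makes `c'` strictly better than `c`, contradicting minimality.
-/

lemma gammaF_nonneg {d k : ℕ} (c : Fin k → EuclideanSpace ℝ (Fin d))
    (x : EuclideanSpace ℝ (Fin d)) : 0 ≤ gammaF c x :=
  Real.iInf_nonneg fun _ => sq_nonneg _

section ZeroCoord

variable {d k : ℕ}

def zeroCoord (c : Fin k → EuclideanSpace ℝ (Fin d)) (p : Fin d) :
    Fin k → EuclideanSpace ℝ (Fin d) :=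
  fun j => WithLp.toLp 2 (Function.update (WithLp.ofLp (c j)) p 0)

@[simp]
lemma zeroCoord_apply (c : Fin k → EuclideanSpace ℝ (Fin d)) (p : Fin d) (j : Fin k)
    (q : Fin d) : zeroCoord c p j q = if q = p then 0 else c j q := by
  simp [zeroCoord, Function.update_apply]

lemma zeroCoord_mem_Ck {Mb : Fin d → ℝ} {c : Fin k → EuclideanSpace ℝ (Fin d)} {p : Fin d}
    (hc : c ∈ Ck k Mb) (hMp : 0 ≤ Mb p) : zeroCoord c p ∈ Ck k Mb := by
  intro j q
  by_cases h : q = p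
  · simpa [h] using hMp
  · simpa [h] using hc j q

lemma supp_zeroCoord (c : Fin k → EuclideanSpace ℝ (Fin d)) (p : Fin d) :
    supp (zeroCoord c p) = supp c \ {p} := by
  ext q
  by_cases h : q = p <;> simp [supp, h]

lemma wnormsq_zeroCoord_add {c : Fin k → EuclideanSpace ℝ (Fin d)} {p : Fin d}
    (w : Fin d → ℝ) (hp : p ∈ supp c) :
    wnormsq w (zeroCoord c p) + w p ^ 2 = wnormsq w c := by
  rw [wnormsq, supp_zeroCoord, Set.indicator_sdiff (Set.singleton_subset_iff.2 hp)]
  simp [Finset.sum_sub_distrib, wnormsq]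

lemma norm_sub_zeroCoord_sq (x : EuclideanSpace ℝ (Fin d))
    (c : Fin k → EuclideanSpace ℝ (Fin d)) (p : Fin d) (j : Fin k) :
    ‖x - zeroCoord c p j‖ ^ 2 = ‖x - c j‖ ^ 2 + x p ^ 2 - (x p - c j p) ^ 2 := by
  simp only [EuclideanSpace.real_norm_sq_eq, PiLp.sub_apply, zeroCoord_apply]
  rw [← Finset.add_sum_erase _ _ (Finset.mem_univ p),
    ← Finset.add_sum_erase _ _ (Finset.mem_univ p)]
  have hrest : ∀ q ∈ Finset.univ.erase p,
      (x q - if q = p then 0 else c j q) ^ 2 = (x q - c j q) ^ 2 := fun q hq => by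
    rw [if_neg (Finset.ne_of_mem_erase hq)]
  rw [Finset.sum_congr rfl hrest, if_pos rfl]
  ring

lemma gammaF_zeroCoord_le [Nonempty (Fin k)] (c : Fin k → EuclideanSpace ℝ (Fin d))
    (p : Fin d) (x : EuclideanSpace ℝ (Fin d)) :
    gammaF (zeroCoord c p) x ≤ gammaF c x + x p ^ 2 - ⨅ j, (x p - c j p) ^ 2 := by
  obtain ⟨j, hj⟩ := Finite.exists_min fun j => ‖x - c j‖ ^ 2
  have hγ : gammaF c x = ‖x - c j‖ ^ 2 :=
    le_antisymm (ciInf_le (Set.finite_range _).bddBelow j) (le_ciInf hj)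
  have hγ' : gammaF (zeroCoord c p) x ≤ ‖x - zeroCoord c p j‖ ^ 2 :=
    ciInf_le (Set.finite_range _).bddBelow j
  have hmin : ⨅ i, (x p - c i p) ^ 2 ≤ (x p - c j p) ^ 2 :=
    ciInf_le (Set.finite_range _).bddBelow j
  rw [norm_sub_zeroCoord_sq] at hγ'
  linarith

end ZeroCoord

section Integrability

variable {d k : ℕ} {P : Measure (EuclideanSpace ℝ (Fin d))} [IsFiniteMeasure P]

lemma sq_sub_le_of_abs_le {a b M : ℝ} (ha : |a| ≤ M) (hb : |b| ≤ M) :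
    (a - b) ^ 2 ≤ (2 * M) ^ 2 := by
  have := abs_le.1 ha
  have := abs_le.1 hb
  exact sq_le_sq' (by linarith) (by linarith)

lemma integrable_sq_coord {M : ℝ} {p : Fin d} (hbound : ∀ᵐ x ∂P, |x p| ≤ M) :
    Integrable (fun x : EuclideanSpace ℝ (Fin d) => x p ^ 2) P := by
  refine Integrable.of_bound (by fun_prop) (M ^ 2) ?_
  filter_upwards [hbound] with x hx
  rw [Real.norm_eq_abs, abs_of_nonneg (sq_nonneg _)]
  exact sq_le_sq' (abs_le.1 hx).1 (abs_le.1 hx).2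

lemma integrable_iInf_sq_sub_coord [Nonempty (Fin k)] {M : ℝ} {p : Fin d}
    (hbound : ∀ᵐ x ∂P, |x p| ≤ M) {a : Fin k → ℝ} (ha : ∀ j, |a j| ≤ M) :
    Integrable (fun x : EuclideanSpace ℝ (Fin d) => ⨅ j, (x p - a j) ^ 2) P := by
  refine Integrable.of_bound
    (Measurable.iInf fun j => by fun_prop).aestronglyMeasurable ((2 * M) ^ 2) ?_
  filter_upwards [hbound] with x hx
  obtain ⟨j⟩ := ‹Nonempty (Fin k)›
  rw [Real.norm_eq_abs, abs_of_nonneg (le_ciInf fun _ => sq_nonneg _)]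
  exact (ciInf_le (Set.finite_range _).bddBelow j).trans (sq_sub_le_of_abs_le hx (ha j))

lemma integrable_gammaF [Nonempty (Fin k)] {Mb : Fin d → ℝ}
    (hbound : ∀ p, ∀ᵐ x ∂P, |x p| ≤ Mb p) {c : Fin k → EuclideanSpace ℝ (Fin d)}
    (hc : c ∈ Ck k Mb) : Integrable (gammaF c) P := by
  refine Integrable.of_bound
    (Measurable.iInf fun j => by fun_prop).aestronglyMeasurable (∑ q, (2 * Mb q) ^ 2) ?_
  filter_upwards [ae_all_iff.2 hbound] with x hx
  obtain ⟨j⟩ := ‹Nonempty (Fin k)›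
  rw [Real.norm_eq_abs, abs_of_nonneg (gammaF_nonneg c x)]
  calc gammaF c x ≤ ‖x - c j‖ ^ 2 := ciInf_le (Set.finite_range _).bddBelow j
    _ = ∑ q, (x q - c j q) ^ 2 := by simp [EuclideanSpace.real_norm_sq_eq]
    _ ≤ ∑ q, (2 * Mb q) ^ 2 :=
      Finset.sum_le_sum fun q _ => sq_sub_le_of_abs_le (hx q) (hc j q)

end Integrability

lemma distortion_zeroCoord_le {d k : ℕ} [Nonempty (Fin k)]
    {P : Measure (EuclideanSpace ℝ (Fin d))} [IsFiniteMeasure P] {Mb : Fin d → ℝ}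
    (hbound : ∀ p, ∀ᵐ x ∂P, |x p| ≤ Mb p) {c : Fin k → EuclideanSpace ℝ (Fin d)}
    (hc : c ∈ Ck k Mb) {p : Fin d} (hMp : 0 ≤ Mb p) :
    distortion P (zeroCoord c p) ≤
      distortion P c + (∫ x, x p ^ 2 ∂P) - ∫ x, (⨅ j, (x p - c j p) ^ 2) ∂P := by
  have hγ := integrable_gammaF hbound hc
  have hsq := integrable_sq_coord (hbound p)
  have hmin := integrable_iInf_sq_sub_coord (hbound p) fun j => hc j p
  have hsum : Integrable (fun x => gammaF c x + x p ^ 2) P := hγ.add hsq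
  have h : ∫ x, gammaF (zeroCoord c p) x ∂P ≤
      ∫ x, (gammaF c x + x p ^ 2 - ⨅ j, (x p - c j p) ^ 2) ∂P :=
    integral_mono (integrable_gammaF hbound (zeroCoord_mem_Ck hc hMp))
    (hsum.sub hmin) (gammaF_zeroCoord_le c p)
  rwa [integral_sub hsum hmin, integral_add hγ hsq] at h

lemma iInf_integral_iInf_sq_sub_coord_le {d k : ℕ} (P : Measure (EuclideanSpace ℝ (Fin d)))
    {M : ℝ} (p : Fin d) {a : Fin k → ℝ} (ha : ∀ j, |a j| ≤ M) :
    ⨅ b : {b : Fin k → ℝ // ∀ j, |b j| ≤ M}, ∫ x, (⨅ j, (x p - b.1 j) ^ 2) ∂P ≤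
      ∫ x, (⨅ j, (x p - a j) ^ 2) ∂P := by
  have hbdd : BddBelow (Set.range fun b : {b : Fin k → ℝ // ∀ j, |b j| ≤ M} =>
      ∫ x, (⨅ j, (x p - b.1 j) ^ 2) ∂P) := by
    refine ⟨0, ?_⟩
    rintro _ ⟨b, rfl⟩
    exact integral_nonneg fun x => Real.iInf_nonneg fun j => sq_nonneg _
  exact ciInf_le hbdd ⟨a, ha⟩

theorem sparse_approximation_zero_coordinate_general
    (d k : ℕ)
    (P : Measure (EuclideanSpace ℝ (Fin d))) [IsProbabilityMeasure P]
    (Mb : Fin d → ℝ)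
    (hbound : ∀ p : Fin d, ∀ᵐ x ∂P, |x p| ≤ Mb p)
    -- deterministic weights, the constant `κ₀`, and the regularization parameter `λ`
    (w : Fin d → ℝ)
    (κ₀ lam : ℝ)
    -- the coordinate `p` and the marginal optimal distortion `R*_p`
    (p : Fin d) (Rstar : ℝ)
    (hRstar : Rstar = ⨅ a : {a : Fin k → ℝ // ∀ j, |a j| ≤ Mb p},
      ∫ x, (⨅ j, (x p - a.1 j) ^ 2) ∂P)
    -- the condition `σ_p² − R*_p < 8 λ² κ₀ w_p² / 3`
    (hcond : (∫ x, (x p) ^ 2 ∂P) - Rstar < 8 * lam ^ 2 * κ₀ * (w p) ^ 2 / 3)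
    -- an optimal codebook `c*`
    (cstar : Fin k → EuclideanSpace ℝ (Fin d))
    -- `c` is an element of `𝓜_λ(c*)`: a minimizer of `3R(c) + 8κ₀λ²‖w_{S(c)}‖²` among
    -- codebooks of `C^k` supported in `S(c*)`
    (c : Fin k → EuclideanSpace ℝ (Fin d))
    (hcmem : c ∈ Ck k Mb) (hcsupp : supp c ⊆ supp cstar)
    (hcmin : ∀ c' ∈ Ck k Mb, supp c' ⊆ supp cstar →
      3 * distortion P c + 8 * κ₀ * lam ^ 2 * wnormsq w c
        ≤ 3 * distortion P c' + 8 * κ₀ * lam ^ 2 * wnormsq w c') :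
    ∀ j, c j p = 0 := by
  intro j
  by_contra hne
  have : Nonempty (Fin k) := ⟨j⟩
  have hMp : 0 ≤ Mb p := (abs_nonneg _).trans (hcmem j p)
  have hR := distortion_zeroCoord_le hbound hcmem hMp
  have hRstar_le : Rstar ≤ ∫ x, (⨅ i, (x p - c i p) ^ 2) ∂P :=
    hRstar ▸ iInf_integral_iInf_sq_sub_coord_le P p fun i => hcmem i p
  have hmin := hcmin _ (zeroCoord_mem_Ck hcmem hMp)
    (by rw [supp_zeroCoord]; exact Set.sdiff_subset.trans hcsupp)
  rw [← wnormsq_zeroCoord_add w ⟨j, hne⟩] at hmin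
  linarith

/-- Proposition `sparseapproximationsupport`: if
`σ_p² − R*_p < 8 λ² κ₀ w_p² / 3`, then every `w`-sparse approximation of an optimal
codebook has zero p-th coordinate. -/
theorem sparse_approximation_zero_coordinate
    (d k : ℕ) (hd : 0 < d) (hk : 0 < k)
    (P : Measure (EuclideanSpace ℝ (Fin d))) [IsProbabilityMeasure P]
    (Mb : Fin d → ℝ) (hMb : ∀ p, 0 ≤ Mb p)
    (hbound : ∀ p : Fin d, ∀ᵐ x ∂P, |x p| ≤ Mb p)
    -- deterministic weights, the constant `κ₀`, and the regularization parameter `λ`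
    (w : Fin d → ℝ) (hwpos : ∀ p, 0 < w p)
    (κ₀ lam : ℝ) (hκ₀ : 0 < κ₀) (hlam : 0 < lam)
    -- the coordinate `p` and the marginal optimal distortion `R*_p`
    (p : Fin d) (Rstar : ℝ)
    (hRstar : Rstar = ⨅ a : {a : Fin k → ℝ // ∀ j, |a j| ≤ Mb p},
      ∫ x, (⨅ j, (x p - a.1 j) ^ 2) ∂P)
    -- the condition `σ_p² − R*_p < 8 λ² κ₀ w_p² / 3`
    (hcond : (∫ x, (x p) ^ 2 ∂P) - Rstar < 8 * lam ^ 2 * κ₀ * (w p) ^ 2 / 3)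
    -- an optimal codebook `c*`
    (cstar : Fin k → EuclideanSpace ℝ (Fin d)) (hcs : cstar ∈ optSet P k)
    -- `c` is an element of `𝓜_λ(c*)`: a minimizer of `3R(c) + 8κ₀λ²‖w_{S(c)}‖²` among
    -- codebooks of `C^k` supported in `S(c*)`
    (c : Fin k → EuclideanSpace ℝ (Fin d))
    (hcmem : c ∈ Ck k Mb) (hcsupp : supp c ⊆ supp cstar)
    (hcmin : ∀ c' ∈ Ck k Mb, supp c' ⊆ supp cstar →
      3 * distortion P c + 8 * κ₀ * lam ^ 2 * wnormsq w c
        ≤ 3 * distortion P c' + 8 * κ₀ * lam ^ 2 * wnormsq w c') :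
    ∀ j, c j p = 0 :=
  sparse_approximation_zero_coordinate_general d k P Mb hbound w κ₀ lam p Rstar hRstar hcond cstar c
    hcmem hcsupp hcmin

end
end

section
/- Let c, c' ∈ C^k and set c* = c*(c'). Suppose κ₀ > 0 satisfies ‖c'' − c*(c'')‖² ≤ κ₀ ℓ(c'', c*(c'')) for all c'' ∈ C^k and ‖c'' − c*‖² ≤ κ₀ ℓ(c'', c*) whenever S(c'') ⊊ S(c*). If S(c) ⊊ S(c*) or c*(c) = c*, then for every δ > 0 and λ > 0: 2 λ I_w( (c' − c)_{S(c)} ) ≤ (1/δ) ℓ(c, c*) + (1/δ) ℓ(c', c*) + 2 δ κ₀ λ² ‖w_{S(c)}‖². -/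
open MeasureTheory ProbabilityTheory Real Matrix Filter

noncomputable section

/-! Split `c' - c = (c' - c*) - (c - c*)` coordinatewise. On each coordinate `p ∈ S(c)` the
triangle inequality and `2ab ≤ a²/(δκ₀) + δκ₀ b²` bound `2λ w_p ‖(c' - c)^{(p)}‖` by
`(‖(c - c*)^{(p)}‖² + ‖(c' - c*)^{(p)}‖²) / (δκ₀) + 2δκ₀λ²w_p²`. Summing over `p`, the squared
coordinate norms add up to `‖c - c*‖²` and `‖c' - c*‖²`, which the margin condition bounds by
`κ₀ ℓ(c, c*)` and `κ₀ ℓ(c', c*)`; the dichotomy on `c` is exactly what makes it apply to `c`. -/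

lemma two_mul_mul_le_sq_div_add_mul_sq {s : ℝ} (hs : 0 < s) (t a : ℝ) :
    2 * t * a ≤ a ^ 2 / s + s * t ^ 2 := by
  have key : a ^ 2 / s + s * t ^ 2 - 2 * t * a = (a - s * t) ^ 2 / s := by
    field_simp
    ring
  have : 0 ≤ (a - s * t) ^ 2 / s := by positivity
  linarith

section coordNorm

variable {d k : ℕ}

lemma coordNorm_eq_norm (c : Fin k → EuclideanSpace ℝ (Fin d)) (p : Fin d) :
    coordNorm c p = ‖WithLp.toLp 2 fun j => c j p‖ := by
  simp [EuclideanSpace.norm_eq, coordNorm, sq_abs]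

lemma coordNorm_sub_le (x y : Fin k → EuclideanSpace ℝ (Fin d)) (p : Fin d) :
    coordNorm (x - y) p ≤ coordNorm x p + coordNorm y p := by
  rw [coordNorm_eq_norm, coordNorm_eq_norm, coordNorm_eq_norm]
  exact norm_sub_le (WithLp.toLp 2 fun j => x j p) (WithLp.toLp 2 fun j => y j p)

lemma sum_coordNorm_sub_sq (x y : Fin k → EuclideanSpace ℝ (Fin d)) :
    ∑ p, coordNorm (x - y) p ^ 2 = distsq x y := by
  simp only [coordNorm, Real.sq_sqrt (Finset.sum_nonneg fun _ _ => sq_nonneg _)]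
  rw [Finset.sum_comm]
  simp [distsq, EuclideanSpace.norm_sq_eq]

lemma two_mul_mul_coordNorm_sub_le {w lam s : ℝ} (hw : 0 ≤ w) (hlam : 0 ≤ lam) (hs : 0 < s)
    (c c' cs : Fin k → EuclideanSpace ℝ (Fin d)) (p : Fin d) :
    2 * lam * (w * coordNorm (c' - c) p)
      ≤ coordNorm (c - cs) p ^ 2 / s + coordNorm (c' - cs) p ^ 2 / s
        + 2 * s * lam ^ 2 * w ^ 2 := by
  have htri : coordNorm (c' - c) p ≤ coordNorm (c' - cs) p + coordNorm (c - cs) p := by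
    simpa only [sub_sub_sub_cancel_right] using coordNorm_sub_le (c' - cs) (c - cs) p
  have hA := two_mul_mul_le_sq_div_add_mul_sq hs (lam * w) (coordNorm (c - cs) p)
  have hB := two_mul_mul_le_sq_div_add_mul_sq hs (lam * w) (coordNorm (c' - cs) p)
  have hmono := mul_le_mul_of_nonneg_left htri (by positivity : 0 ≤ 2 * lam * w)
  nlinarith

lemma two_mul_sum_indicator_coordNorm_sub_le {w : Fin d → ℝ} (hw : ∀ p, 0 ≤ w p) {lam s : ℝ}
    (hlam : 0 ≤ lam) (hs : 0 < s) (S : Set (Fin d)) (c c' cs : Fin k → EuclideanSpace ℝ (Fin d)) :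
    2 * lam * ∑ p, S.indicator (fun q => w q * coordNorm (c' - c) q) p
      ≤ distsq c cs / s + distsq c' cs / s
        + 2 * s * lam ^ 2 * ∑ p, S.indicator (fun q => w q ^ 2) p := by
  have hpoint : ∀ p, 2 * lam * S.indicator (fun q => w q * coordNorm (c' - c) q) p
      ≤ coordNorm (c - cs) p ^ 2 / s + coordNorm (c' - cs) p ^ 2 / s
        + 2 * s * lam ^ 2 * S.indicator (fun q => w q ^ 2) p := by
    intro p
    by_cases hp : p ∈ S
    · simp only [Set.indicator_of_mem hp]
      exact two_mul_mul_coordNorm_sub_le (hw p) hlam hs c c' cs p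
    · simp only [Set.indicator_of_notMem hp, mul_zero, add_zero]
      positivity
  calc 2 * lam * ∑ p, S.indicator (fun q => w q * coordNorm (c' - c) q) p
      = ∑ p, 2 * lam * S.indicator (fun q => w q * coordNorm (c' - c) q) p :=
        Finset.mul_sum _ _ _
    _ ≤ ∑ p, (coordNorm (c - cs) p ^ 2 / s + coordNorm (c' - cs) p ^ 2 / s
        + 2 * s * lam ^ 2 * S.indicator (fun q => w q ^ 2) p) :=
        Finset.sum_le_sum fun p _ => hpoint p
    _ = _ := by
      rw [Finset.sum_add_distrib, Finset.sum_add_distrib, ← Finset.sum_div, ← Finset.sum_div,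
        sum_coordNorm_sub_sq, sum_coordNorm_sub_sq, Finset.mul_sum]

end coordNorm

lemma div_mul_le_one_div_mul_of_le_mul {a b x y : ℝ} (ha : 0 < a) (hb : 0 < b) (h : x ≤ b * y) :
    x / (a * b) ≤ 1 / a * y := by
  rw [div_le_iff₀ (mul_pos ha hb)]
  calc x ≤ b * y := h
    _ = 1 / a * y * (a * b) := by field_simp

theorem sparsity_lemma_vandeGeer_general
    (d k : ℕ)
    (P : Measure (EuclideanSpace ℝ (Fin d)))
    (Mb : Fin d → ℝ)
    -- deterministic weights
    (w : Fin d → ℝ) (hwpos : ∀ p, 0 < w p)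
    (proj : (Fin k → EuclideanSpace ℝ (Fin d)) → (Fin k → EuclideanSpace ℝ (Fin d)))
    -- the margin-type constant `κ₀`
    (κ₀ : ℝ) (hκ₀pos : 0 < κ₀)
    (hκa : ∀ c'' ∈ Ck k Mb,
      distsq c'' (proj c'') ≤ κ₀ * (distortion P c'' - distortion P (proj c'')))
    -- the codebooks `c, c'` and `c* = c*(c')`
    (c c' : Fin k → EuclideanSpace ℝ (Fin d))
    (hc : c ∈ Ck k Mb) (hc' : c' ∈ Ck k Mb)
    (cs : Fin k → EuclideanSpace ℝ (Fin d)) (hcs : cs = proj c')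
    (hκb : ∀ c'' ∈ Ck k Mb, supp c'' ⊂ supp cs →
      distsq c'' cs ≤ κ₀ * (distortion P c'' - distortion P cs))
    -- the dichotomy `S(c) ⊊ S(c*)` or `c*(c) = c*`
    (hcase : supp c ⊂ supp cs ∨ proj c = cs)
    (δ lam : ℝ) (hδ : 0 < δ) (hlam : 0 < lam) :
    2 * lam * (∑ p, (supp c).indicator (fun q => w q * coordNorm (c' - c) q) p)
      ≤ (1 / δ) * (distortion P c - distortion P cs)
        + (1 / δ) * (distortion P c' - distortion P cs)
        + 2 * δ * κ₀ * lam ^ 2 * wnormsq w c := by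
  have hc_margin : distsq c cs ≤ κ₀ * (distortion P c - distortion P cs) := by
    rcases hcase with hsupp | hproj_c
    · exact hκb c hc hsupp
    · simpa only [hproj_c] using hκa c hc
  have hc'_margin : distsq c' cs ≤ κ₀ * (distortion P c' - distortion P cs) := hcs ▸ hκa c' hc'
  have hsum := two_mul_sum_indicator_coordNorm_sub_le (fun p => (hwpos p).le) hlam.le
    (mul_pos hδ hκ₀pos) (supp c) c c' cs
  have hwnormsq : ∑ p, (supp c).indicator (fun q => w q ^ 2) p = wnormsq w c := rfl
  rw [hwnormsq, ← mul_assoc 2 δ κ₀] at hsum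
  linarith [div_mul_le_one_div_mul_of_le_mul hδ hκ₀pos hc_margin,
    div_mul_le_one_div_mul_of_le_mul hδ hκ₀pos hc'_margin]

/-- Lemma `lemmevandeGeer`: for codebooks `c, c' ∈ C^k` with
`c* = c*(c')`, if `S(c) ⊊ S(c*)` or `c*(c) = c*`, then for every `δ > 0`,
`2λ I_{w,1}(c' − c) ≤ (1/δ) ℓ(c,c*) + (1/δ) ℓ(c',c*) + 2δκ₀λ²‖w_{S(c)}‖²`. -/
theorem sparsity_lemma_vandeGeer
    (d k : ℕ) (hd : 0 < d) (hk : 0 < k)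
    (P : Measure (EuclideanSpace ℝ (Fin d))) [IsProbabilityMeasure P]
    (Mb : Fin d → ℝ) (hMb : ∀ p, 0 ≤ Mb p)
    (hbound : ∀ p : Fin d, ∀ᵐ x ∂P, |x p| ≤ Mb p)
    -- deterministic weights
    (w : Fin d → ℝ) (hwpos : ∀ p, 0 < w p)
    -- `𝓜` is nonempty, and `c*(·)` selects a closest optimal codebook
    (hMne : (optSet P k).Nonempty)
    (proj : (Fin k → EuclideanSpace ℝ (Fin d)) → (Fin k → EuclideanSpace ℝ (Fin d)))
    (hproj : ∀ c, proj c ∈ optSet P k ∧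
      ∀ cs ∈ optSet P k, distsq c (proj c) ≤ distsq c cs)
    -- the margin-type constant `κ₀`
    (κ₀ : ℝ) (hκ₀pos : 0 < κ₀)
    (hκa : ∀ c'' ∈ Ck k Mb,
      distsq c'' (proj c'') ≤ κ₀ * (distortion P c'' - distortion P (proj c'')))
    -- the codebooks `c, c'` and `c* = c*(c')`
    (c c' : Fin k → EuclideanSpace ℝ (Fin d))
    (hc : c ∈ Ck k Mb) (hc' : c' ∈ Ck k Mb)
    (cs : Fin k → EuclideanSpace ℝ (Fin d)) (hcs : cs = proj c')
    (hκb : ∀ c'' ∈ Ck k Mb, supp c'' ⊂ supp cs →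
      distsq c'' cs ≤ κ₀ * (distortion P c'' - distortion P cs))
    -- the dichotomy `S(c) ⊊ S(c*)` or `c*(c) = c*`
    (hcase : supp c ⊂ supp cs ∨ proj c = cs)
    (δ lam : ℝ) (hδ : 0 < δ) (hlam : 0 < lam) :
    2 * lam * (∑ p, (supp c).indicator (fun q => w q * coordNorm (c' - c) q) p)
      ≤ (1 / δ) * (distortion P c - distortion P cs)
        + (1 / δ) * (distortion P c' - distortion P cs)
        + 2 * δ * κ₀ * lam ^ 2 * wnormsq w c :=
  sparsity_lemma_vandeGeer_general d k P Mb w hwpos proj κ₀ hκ₀pos hκa c c' hc hc' cs hcs hκb hcase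
    δ lam hδ hlam
end
end
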